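/- arXiv:2411.12931 — 2 statements merged into one kernel-verified Lean document; each statement's English description precedes it below -/
import Mathlib

section
/- (Lipschitz summation formula) Let k ∈ ℂ with Re(k) > 1, let z be in the upper half-plane, and let x ∈ ℝ. Then Σ_{n∈ℤ} e^{2πinx} (z+n)^{−k} = ((−2πi)^k / Γ(k)) · Σ_{r ∈ ℤ−x, r>0} r^{k−1} e^{2πirz}, with the principal branch of the complex power. -/
/-!
Poisson summation applied to `f t = t₊ ^ (k - 1) * exp (2πitz)`, summed over `ℤ - x`, gives the
right-hand side. The Fourier transform of `f` at `-ξ` is `Γ(k) (-2πi (z + ξ)) ^ (-k)`: this is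
`∫₀^∞ t ^ (k - 1) e ^ (-ct) dt = Γ(k) c ^ (-k)`, known for real `c > 0` and continued analytically
to `Re c > 0`. Since `arg (-2πi) = -π/2` and `z + ξ` lies in the upper half-plane, the power
splits as `(-2πi) ^ (-k) (z + ξ) ^ (-k)`, so the Fourier side is `Γ(k) (-2πi) ^ (-k)` times the
left-hand side.
-/

open Complex MeasureTheory Set Filter Topology Asymptotics

namespace Complex

lemma norm_ofReal_cpow_mul_cexp_neg_mul {a c : ℂ} {t : ℝ} (ht : 0 < t) :
    ‖(t : ℂ) ^ (a - 1) * cexp (-(c * t))‖ = t ^ (a.re - 1) * Real.exp (-(c.re * t)) := by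
  rw [norm_mul, norm_cpow_eq_rpow_re_of_pos ht, norm_exp]
  simp

lemma aestronglyMeasurable_ofReal_cpow_mul_cexp_neg_mul (a c : ℂ) :
    AEStronglyMeasurable (fun t : ℝ => (t : ℂ) ^ (a - 1) * cexp (-(c * t)))
      (volume.restrict (Ioi 0)) := by
  refine ContinuousOn.aestronglyMeasurable (fun t ht => ?_) measurableSet_Ioi
  have : 0 < (t : ℂ).re := by simpa using ht
  fun_prop (disch := exact Or.inl this)

lemma integrableOn_ofReal_cpow_mul_cexp_neg_mul {a c : ℂ} (ha : 0 < a.re) (hc : 0 < c.re) :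
    IntegrableOn (fun t : ℝ => (t : ℂ) ^ (a - 1) * cexp (-(c * t))) (Ioi 0) := by
  refine Integrable.mono' (integrableOn_rpow_mul_exp_neg_mul_rpow (s := a.re - 1) (p := 1)
    (by linarith) one_pos hc) (aestronglyMeasurable_ofReal_cpow_mul_cexp_neg_mul a c) ?_
  filter_upwards [ae_restrict_mem measurableSet_Ioi] with t ht
  rw [norm_ofReal_cpow_mul_cexp_neg_mul ht, Real.rpow_one, neg_mul]

lemma half_re_lt_re_of_mem_ball {c c' : ℂ} (h : c' ∈ Metric.ball c (c.re / 2)) :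
    c.re / 2 < c'.re := by
  have := (abs_le.mp (abs_re_le_norm (c' - c))).1
  rw [Metric.mem_ball, dist_eq] at h
  simp only [sub_re] at this
  linarith

lemma differentiableOn_integral_ofReal_cpow_mul_cexp_neg_mul {a : ℂ} (ha : 0 < a.re) :
    DifferentiableOn ℂ (fun c => ∫ t : ℝ in Ioi 0, (t : ℂ) ^ (a - 1) * cexp (-(c * t)))
      {c | 0 < c.re} := by
  intro c (hc : 0 < c.re)
  have hF'_meas := (aestronglyMeasurable_ofReal_cpow_mul_cexp_neg_mul a c).mul
    (continuous_ofReal.neg.aestronglyMeasurable (μ := volume.restrict (Ioi 0)))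
  simp only [Pi.mul_def, mul_assoc] at hF'_meas
  refine (hasDerivAt_integral_of_dominated_loc_of_deriv_le
    (F' := fun c' t => (t : ℂ) ^ (a - 1) * (cexp (-(c' * t)) * -t))
    (bound := fun t => t ^ a.re * Real.exp (-(c.re / 2) * t ^ (1 : ℝ)))
    (Metric.ball_mem_nhds c (half_pos hc))
    (.of_forall fun c' => aestronglyMeasurable_ofReal_cpow_mul_cexp_neg_mul a c')
    (integrableOn_ofReal_cpow_mul_cexp_neg_mul ha hc)
    hF'_meas ?_
    (integrableOn_rpow_mul_exp_neg_mul_rpow (by linarith) one_pos (half_pos hc)) ?_).2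
    |>.differentiableAt.differentiableWithinAt
  · filter_upwards [ae_restrict_mem measurableSet_Ioi] with t (ht : 0 < t) c' hc'
    rw [← mul_assoc, norm_mul, norm_ofReal_cpow_mul_cexp_neg_mul ht, norm_neg, norm_real,
      Real.norm_of_nonneg ht.le, Real.rpow_one, mul_right_comm, ← Real.rpow_add_one ht.ne',
      sub_add_cancel, neg_mul]
    gcongr
    nlinarith [half_re_lt_re_of_mem_ball hc']
  · filter_upwards with t c' _
    exact (((hasDerivAt_id c').mul_const (t : ℂ)).neg.cexp.const_mul _).congr_deriv (by simp)

lemma integral_ofReal_cpow_mul_cexp_neg_mul {a c : ℂ} (ha : 0 < a.re) (hc : 0 < c.re) :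
    ∫ t : ℝ in Ioi 0, (t : ℂ) ^ (a - 1) * cexp (-(c * t)) = Gamma a * c ^ (-a) := by
  have hU : IsOpen {c : ℂ | 0 < c.re} := isOpen_lt continuous_const continuous_re
  have h_real : ∀ r : ℝ, 0 < r →
      ∫ t : ℝ in Ioi 0, (t : ℂ) ^ (a - 1) * cexp (-(r * t)) = Gamma a * (r : ℂ) ^ (-a) := by
    intro r hr
    rw [integral_cpow_mul_exp_neg_mul_Ioi ha hr, mul_comm, one_div, inv_cpow _ _
      (by rw [arg_ofReal_of_nonneg hr.le]; positivity), cpow_neg]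
  have h_near_one : ∃ᶠ w in 𝓝[≠] (1 : ℂ),
      ∫ t : ℝ in Ioi 0, (t : ℂ) ^ (a - 1) * cexp (-(w * t)) = Gamma a * w ^ (-a) := by
    have h_ofReal : Tendsto ((↑) : ℝ → ℂ) (𝓝[≠] 1) (𝓝[≠] 1) :=
      tendsto_nhdsWithin_of_tendsto_nhds_of_eventually_within _
        (by simpa using continuous_ofReal.continuousWithinAt.tendsto (x := (1 : ℝ)) (s := {1}ᶜ))
        (eventually_nhdsWithin_of_forall fun r hr => by simpa using hr)
    refine h_ofReal.frequently (Eventually.frequently ?_)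
    filter_upwards [nhdsWithin_le_nhds (eventually_gt_nhds one_pos)] with r hr
    exact h_real r hr
  refine (differentiableOn_integral_ofReal_cpow_mul_cexp_neg_mul ha).analyticOnNhd hU
    |>.eqOn_of_preconnected_of_frequently_eq ?_ (convex_halfSpace_re_gt 0).isPreconnected
      (by simp) h_near_one hc
  exact (DifferentiableOn.const_mul (fun w hw => (differentiableAt_id.cpow_const
    (Or.inl hw)).differentiableWithinAt) _).analyticOnNhd hU

lemma mul_cpow_of_arg_add_mem_Ioc {a b : ℂ} (ha : a ≠ 0) (hb : b ≠ 0)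
    (h : a.arg + b.arg ∈ Ioc (-Real.pi) Real.pi) (s : ℂ) : (a * b) ^ s = a ^ s * b ^ s := by
  rw [cpow_def_of_ne_zero (mul_ne_zero ha hb), cpow_def_of_ne_zero ha, cpow_def_of_ne_zero hb,
    ← exp_add, ← add_mul, log_mul ha hb h]

lemma summable_add_intCast_cpow_neg {k : ℂ} (hk : 1 < k.re) (z : ℂ) :
    Summable fun n : ℤ => (z + n) ^ (-k) := by
  have h_lin : (fun n : ℤ => ‖z + n‖) =Θ[cofinite] fun n => |(n : ℝ)| := by
    simpa using (EisensteinSeries.linear_isTheta_right_add 1 0 z).norm_left.norm_right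
  refine summable_of_isBigO (Real.summable_abs_int_rpow hk) ?_
  refine (isBigO_cpow_rpow isBoundedUnder_const).trans ?_
  simpa using (h_lin.rpow (r := -k.re) (.of_forall fun _ => norm_nonneg _)
    (.of_forall fun _ => abs_nonneg _)).isBigO

lemma neg_two_pi_I_mul_cpow {w : ℂ} (hw : 0 < w.im) (s : ℂ) :
    (-(2 * Real.pi * I) * w) ^ s = (-(2 * Real.pi * I)) ^ s * w ^ s := by
  have h_arg : (-(2 * Real.pi * I)).arg = -(Real.pi / 2) := by
    rw [show -(2 * Real.pi * I) = ((2 * Real.pi : ℝ) : ℂ) * -I by push_cast; ring,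
      arg_real_mul _ (by positivity), arg_neg_I]
  refine mul_cpow_of_arg_add_mem_Ioc (by simp [Real.pi_ne_zero]) (by rintro rfl; simp at hw) ?_ s
  rw [h_arg]
  constructor <;> linarith [Real.pi_pos, arg_nonneg_iff.mpr hw.le, arg_le_pi w]

end Complex

noncomputable def lipschitzKernel (k z : ℂ) (t : ℝ) : ℂ :=
  ((max t 0 : ℝ) : ℂ) ^ (k - 1) * cexp (2 * Real.pi * I * t * z)

section lipschitzKernel

open FourierTransform

variable {k z : ℂ}

lemma lipschitzKernel_of_nonneg {t : ℝ} (ht : 0 ≤ t) :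
    lipschitzKernel k z t = (t : ℂ) ^ (k - 1) * cexp (2 * Real.pi * I * t * z) := by
  rw [lipschitzKernel, max_eq_left ht]

lemma lipschitzKernel_of_nonpos (hk : k ≠ 1) {t : ℝ} (ht : t ≤ 0) : lipschitzKernel k z t = 0 := by
  rw [lipschitzKernel, max_eq_right ht, ofReal_zero, zero_cpow (sub_ne_zero.mpr hk), zero_mul]

lemma continuous_lipschitzKernel (hk : 1 < k.re) : Continuous (lipschitzKernel k z) := by
  refine .mul (continuous_iff_continuousAt.mpr fun t => ?_) (by fun_prop)
  exact (continuousAt_cpow_const_of_re_pos (by simp) (by simpa using hk)).comp (by fun_prop)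

lemma norm_lipschitzKernel {t : ℝ} (ht : 0 < t) :
    ‖lipschitzKernel k z t‖ = t ^ (k.re - 1) * Real.exp (-(2 * Real.pi * z.im) * t) := by
  have h_re : (2 * Real.pi * I * t * z).re = -(2 * Real.pi * z.im) * t := by
    rw [show 2 * Real.pi * I * t * z = ((2 * Real.pi * t : ℝ) : ℂ) * (I * z) by push_cast; ring,
      re_ofReal_mul, I_mul_re]
    ring
  rw [lipschitzKernel_of_nonneg ht.le, norm_mul, norm_cpow_eq_rpow_re_of_pos ht, norm_exp, h_re,
    sub_re, one_re]

lemma lipschitzKernel_isBigO_cocompact (hk : k ≠ 1) (hz : 0 < z.im) :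
    lipschitzKernel k z =O[cocompact ℝ] fun t => |t| ^ (-2 : ℝ) := by
  rw [cocompact_eq_atBot_atTop, isBigO_sup]
  constructor
  · refine (EventuallyEq.isBigO ?_).trans (isBigO_zero _ _)
    filter_upwards [eventually_le_atBot 0] with t ht
    exact lipschitzKernel_of_nonpos hk ht
  · have h_decay := tendsto_rpow_mul_exp_neg_mul_atTop_nhds_zero (k.re + 1) (2 * Real.pi * z.im)
      (by positivity)
    refine .of_bound 1 ?_
    filter_upwards [eventually_gt_atTop 0, h_decay.eventually (gt_mem_nhds one_pos)]
      with t ht h_small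
    rw [norm_lipschitzKernel ht, Real.norm_of_nonneg (by positivity), abs_of_pos ht, one_mul]
    calc t ^ (k.re - 1) * Real.exp (-(2 * Real.pi * z.im) * t)
        = t ^ (k.re + 1) * Real.exp (-(2 * Real.pi * z.im) * t) * t ^ (-2 : ℝ) := by
          rw [mul_right_comm _ _ (t ^ (-2 : ℝ)), ← Real.rpow_add ht]
          ring_nf
      _ ≤ t ^ (-2 : ℝ) := by
          nlinarith [Real.rpow_nonneg ht.le (-2 : ℝ)]

lemma fourier_lipschitzKernel_neg (hk : 0 < k.re) (hk1 : k ≠ 1) (hz : 0 < z.im) (ξ : ℝ) :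
    𝓕 (lipschitzKernel k z) (-ξ) = Gamma k * (-(2 * Real.pi * I)) ^ (-k) * (z + ξ) ^ (-k) := by
  have h_re : 0 < (-(2 * Real.pi * I) * (z + ξ)).re := by
    simpa using mul_pos Real.two_pi_pos hz
  rw [Real.fourier_real_eq_integral_exp_smul, ← setIntegral_eq_integral_of_forall_compl_eq_zero
    (s := Ioi 0) fun t ht => by rw [lipschitzKernel_of_nonpos hk1 (not_lt.mp ht), smul_zero],
    mul_assoc, ← neg_two_pi_I_mul_cpow (by simpa using hz),
    ← integral_ofReal_cpow_mul_cexp_neg_mul hk h_re]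
  refine setIntegral_congr_fun measurableSet_Ioi fun t (ht : 0 < t) => ?_
  rw [lipschitzKernel_of_nonneg ht.le, smul_eq_mul, mul_left_comm, ← exp_add]
  congr 2
  push_cast
  ring

lemma summable_fourier_lipschitzKernel (hk : 1 < k.re) (hz : 0 < z.im) :
    Summable fun n : ℤ => 𝓕 (lipschitzKernel k z) n := by
  rw [← (Equiv.neg ℤ).summable_iff]
  refine ((summable_add_intCast_cpow_neg hk z).mul_left
    (Gamma k * (-(2 * Real.pi * I)) ^ (-k))).congr fun n => ?_
  rw [Function.comp_apply, Equiv.neg_apply, Int.cast_neg,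
    fourier_lipschitzKernel_neg (by linarith) (by rintro rfl; simp at hk) hz, ofReal_intCast]

lemma tsum_lipschitzKernel_neg_add_intCast (hk : k ≠ 1) (x : ℝ) :
    ∑' n : ℤ, lipschitzKernel k z (-x + n)
      = ∑' n : {n : ℤ // x < n},
          ((n : ℂ) - x) ^ (k - 1) * cexp (2 * Real.pi * I * ((n : ℂ) - x) * z) := by
  rw [← tsum_subtype_eq_of_support_subset (s := {n : ℤ | x < n}) fun n hn => ?_]
  · refine tsum_congr fun n => ?_
    rw [lipschitzKernel_of_nonneg (by linarith [n.2.out])]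
    push_cast
    ring_nf
  · by_contra h
    exact hn (lipschitzKernel_of_nonpos hk (by simpa using h))

lemma tsum_fourier_lipschitzKernel_mul_fourier (hk : 0 < k.re) (hk1 : k ≠ 1) (hz : 0 < z.im)
    (x : ℝ) :
    ∑' n : ℤ, 𝓕 (lipschitzKernel k z) n * fourier n ((-x : ℝ) : UnitAddCircle)
      = Gamma k * (-(2 * Real.pi * I)) ^ (-k) *
          ∑' n : ℤ, cexp (2 * Real.pi * I * n * x) * (z + n) ^ (-k) := by
  rw [← tsum_mul_left, ← (Equiv.neg ℤ).tsum_eq]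
  refine tsum_congr fun n => ?_
  rw [Equiv.neg_apply, Int.cast_neg, fourier_lipschitzKernel_neg hk hk1 hz, fourier_coe_apply,
    ofReal_intCast]
  push_cast
  ring_nf

end lipschitzKernel

/-- Lipschitz summation formula: for `Re k > 1`, `z` in the upper half-plane and
`x ∈ ℝ`,
`∑_{n ∈ ℤ} e^{2πinx}(z+n)^{-k}
  = ((-2πi)^k / Γ(k)) ∑_{r ∈ ℤ - x, r > 0} r^{k-1} e^{2πirz}`. -/
theorem lipschitz_summation_formula (k : ℂ) (hk : 1 < k.re)
    (z : ℂ) (hz : 0 < z.im) (x : ℝ) :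
    ∑' n : ℤ, Complex.exp (2 * Real.pi * I * (n : ℂ) * (x : ℂ)) * (z + (n : ℂ)) ^ (-k)
      = ((-(2 * Real.pi * I)) ^ k / Complex.Gamma k) *
          ∑' n : {n : ℤ // x < (n : ℝ)},
            (((n : ℤ) : ℂ) - (x : ℂ)) ^ (k - 1) *
              Complex.exp (2 * Real.pi * I * (((n : ℤ) : ℂ) - (x : ℂ)) * z) := by
  have hk1 : k ≠ 1 := by rintro rfl; simp at hk
  have h_gamma : Gamma k ≠ 0 := Gamma_ne_zero_of_re_pos (by linarith)
  have h_pow : (-(2 * Real.pi * I) : ℂ) ^ k ≠ 0 := by simp [cpow_eq_zero_iff, Real.pi_ne_zero]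
  have h_poisson := Real.tsum_eq_tsum_fourier_of_rpow_decay_of_summable
    (continuous_lipschitzKernel hk) one_lt_two (lipschitzKernel_isBigO_cocompact hk1 hz)
    (summable_fourier_lipschitzKernel hk hz) (-x)
  rw [tsum_lipschitzKernel_neg_add_intCast hk1,
    tsum_fourier_lipschitzKernel_mul_fourier (by linarith) hk1 hz, cpow_neg] at h_poisson
  rw [h_poisson, ← mul_assoc, ← mul_assoc, div_mul_cancel₀ _ h_gamma, mul_inv_cancel₀ h_pow,
    one_mul]
end

section
/- Let M = U ⊕ U(2) ⊕ A₁(−1)^{⊕m} and let u, v ∈ U(2) ⊕ A₁(−1)^{⊕m} ⊂ M be primitive vectors with u² = v², both of divisibility d (i.e. ⟨u,M⟩ = ⟨v,M⟩ = dℤ), and with (u−v)/d ∈ M. Suppose u', v' ∈ U(2) ⊕ A₁(−1)^{⊕m} satisfy ⟨u,u'⟩ = ⟨v,v'⟩ = d, and set w = (u−v)/d. Then the composition g = t(e₁, −v') ∘ t(f₁, w) ∘ t(e₁, u') of Eichler transvections (with e₁, f₁ the standard basis of U) is an isometry of M with g(u) = v. -/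
namespace Stmt14

/-- Index type of `M = U ⊕ U(2) ⊕ A₁(-1)^m`. -/
abbrev Idx (m : ℕ) := (Fin 2 ⊕ Fin 2) ⊕ Fin m

/-- The Gram matrix of `M = U ⊕ U(2) ⊕ A₁(-1)^m`. -/
def gram (m : ℕ) : Matrix (Idx m) (Idx m) ℤ :=
  Matrix.fromBlocks
    (Matrix.fromBlocks !![0, 1; 1, 0] 0 0 !![0, 2; 2, 0]) 0 0
    ((-2 : ℤ) • (1 : Matrix (Fin m) (Fin m) ℤ))

/-- The bilinear form of `M = U ⊕ U(2) ⊕ A₁(-1)^m`. -/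
def B (m : ℕ) (x y : Idx m → ℤ) : ℤ :=
  dotProduct x ((gram m).mulVec y)

def e₁ (m : ℕ) : Idx m → ℤ := Pi.single (Sum.inl (Sum.inl 0)) 1
def f₁ (m : ℕ) : Idx m → ℤ := Pi.single (Sum.inl (Sum.inl 1)) 1

/-- The Eichler transvection
`t(x,y)(ν) = ν - ⟨y,ν⟩x + ⟨x,ν⟩y - (⟨x,ν⟩⟨y,y⟩/2)x`. -/
def eichler (m : ℕ) (x y ν : Idx m → ℤ) : Idx m → ℤ :=
  ν - B m y ν • x + B m x ν • y - (B m x ν * (B m y y / 2)) • x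

/-!
An Eichler transvection `t(x, y)` with `x` isotropic and `y ⊥ x` is an isometry of any even
lattice, with inverse `t(x, -y)`. Following `u`: `t(e₁, u')` sends it to `u - d e₁`, then
`t(f₁, w)` sends that to `v - d e₁` because `d ⟨w, w⟩ / 2 = ⟨w, u⟩` (expand
`d² ⟨w, w⟩ = ⟨u - v, u - v⟩` using `u² = v²`), and `t(e₁, -v')` adds back `d e₁`.
-/

open Matrix

theorem toBilin'_add_transpose_self_apply_self {n R : Type*} [Fintype n] [DecidableEq n]
    [CommRing R] (S : Matrix n n R) (x : n → R) :
    (S + Sᵀ).toBilin' x x = 2 * S.toBilin' x x := by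
  rw [toBilin'_apply', toBilin'_apply', add_mulVec, dotProduct_add, mulVec_transpose,
    dotProduct_comm x (x ᵥ* S), ← dotProduct_mulVec, two_mul]

section Transvection

variable {M : Type*} [AddCommGroup M] (β : LinearMap.BilinForm ℤ M)

/-- `β y y / 2` rounds down; it is exact in the even lattices to which the results below apply. -/
def eichlerTransvection (x y ν : M) : M :=
  ν - β y ν • x + β x ν • y - (β x ν * (β y y / 2)) • x

variable {β}

theorem eichlerTransvection_of_apply_eq_zero {x y ν : M} (h : β x ν = 0) :
    eichlerTransvection β x y ν = ν - β y ν • x := by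
  simp [eichlerTransvection, h]

theorem eichlerTransvection_apply_apply (hβ : β.IsSymm) {x y : M} (hx : β x x = 0)
    (hxy : β x y = 0) (hy : Even (β y y)) (ν μ : M) :
    β (eichlerTransvection β x y ν) (eichlerTransvection β x y μ) = β ν μ := by
  have hc : β y y / 2 * 2 = β y y := Int.ediv_mul_cancel (even_iff_two_dvd.mp hy)
  simp only [eichlerTransvection, map_sub, map_add, map_smul, LinearMap.sub_apply,
    LinearMap.add_apply, LinearMap.smul_apply, smul_eq_mul, hx, hxy, hβ.eq y x,
    hβ.eq ν x, hβ.eq ν y]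
  linear_combination -(β x ν * β x μ) * hc

theorem eichlerTransvection_neg_apply_eichlerTransvection (hβ : β.IsSymm) {x y : M}
    (hx : β x x = 0) (hxy : β x y = 0) (hy : Even (β y y)) (ν : M) :
    eichlerTransvection β x (-y) (eichlerTransvection β x y ν) = ν := by
  have hc : β y y / 2 * 2 = β y y := Int.ediv_mul_cancel (even_iff_two_dvd.mp hy)
  simp only [eichlerTransvection, map_sub, map_add, map_smul, map_neg, LinearMap.neg_apply,
    smul_eq_mul, hx, hxy, hβ.eq y x, neg_neg]
  linear_combination (norm := module) (-β x ν) • hc • x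

theorem bijective_eichlerTransvection (hβ : β.IsSymm) {x y : M} (hx : β x x = 0)
    (hxy : β x y = 0) (hy : Even (β y y)) : Function.Bijective (eichlerTransvection β x y) := by
  have hxy' : β x (-y) = 0 := by rw [map_neg, hxy, neg_zero]
  have hy' : Even (β (-y) (-y)) := by simpa using hy
  refine Function.bijective_iff_has_inverse.mpr ⟨eichlerTransvection β x (-y),
    eichlerTransvection_neg_apply_eichlerTransvection hβ hx hxy hy, fun ν => ?_⟩
  simpa using eichlerTransvection_neg_apply_eichlerTransvection hβ hx hxy' hy' ν

theorem apply_eq_zero_of_smul_eq_sub {x u v w : M} {d : ℤ} (hd : d ≠ 0) (hw : d • w = u - v)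
    (hu : β x u = 0) (hv : β x v = 0) : β x w = 0 := by
  have : d * β x w = 0 := by rw [← smul_eq_mul, ← map_smul, hw, map_sub, hu, hv, sub_zero]
  exact (mul_eq_zero.mp this).resolve_left hd

theorem eichlerTransvection_comp_apply_eq (hβ : β.IsSymm) {e f u v u' v' w : M} {d : ℤ}
    (hd : d ≠ 0) (he : β e e = 0) (hef : β e f = 1) (hue : β e u = 0) (huf : β f u = 0)
    (hve : β e v = 0) (hv'e : β e v' = 0) (huv : β u u = β v v) (hw : d • w = u - v)
    (hw_even : Even (β w w)) (huu' : β u u' = d) (hvv' : β v v' = d) :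
    eichlerTransvection β e (-v')
      (eichlerTransvection β f w (eichlerTransvection β e u' u)) = v := by
  have hwe : β w e = 0 := by rw [hβ.eq]; exact apply_eq_zero_of_smul_eq_sub hd hw hue hve
  have hdwu : d * β w u = β u u - β v u := by
    rw [← smul_eq_mul, ← LinearMap.smul_apply, ← map_smul, hw]; simp
  have hdww : d * (d * β w w) = 2 * d * β w u := by
    have h : β (d • w) (d • w) = d * (d * β w w) := by simp
    rw [← h, hw]
    simp only [map_sub, LinearMap.sub_apply]
    linear_combination -2 * hdwu - huv - hβ.eq u v
  have hc : d * (β w w / 2) = β w u := by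
    have h2 : β w w / 2 * 2 = β w w := Int.ediv_mul_cancel (even_iff_two_dvd.mp hw_even)
    apply mul_left_cancel₀ (mul_ne_zero two_ne_zero hd)
    linear_combination hdww + d * d * h2
  have hu_img : eichlerTransvection β e u' u = u - d • e := by
    rw [eichlerTransvection_of_apply_eq_zero hue, hβ.eq, huu']
  have hu_sub_img : eichlerTransvection β f w (u - d • e) = v - d • e := by
    have hfu : β f (u - d • e) = -d := by simp [huf, hβ.eq f e, hef]
    have hwu : β w (u - d • e) = β w u := by simp [hwe]
    rw [eichlerTransvection, hfu, hwu, neg_mul, hc]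
    linear_combination (norm := module) -hw
  have hv_sub_img : eichlerTransvection β e (-v') (v - d • e) = v := by
    rw [eichlerTransvection_of_apply_eq_zero (by simp [hve, he])]
    simp [hβ.eq v' v, hvv', hβ.eq v' e, hv'e]
  rw [hu_img, hu_sub_img, hv_sub_img]

end Transvection

def gramHalf (m : ℕ) : Matrix (Idx m) (Idx m) ℤ :=
  fromBlocks (fromBlocks !![0, 1; 0, 0] 0 0 !![0, 2; 0, 0]) 0 0 (-1)

theorem gram_eq (m : ℕ) : gram m = gramHalf m + (gramHalf m)ᵀ := by
  simp only [gram, gramHalf, fromBlocks_transpose, fromBlocks_add]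
  congr 2
  · ext i j; fin_cases i <;> fin_cases j <;> rfl
  · ext i j; fin_cases i <;> fin_cases j <;> rfl
  · rw [transpose_neg, transpose_one]; module

def form (m : ℕ) : LinearMap.BilinForm ℤ (Idx m → ℤ) := (gram m).toBilin'

theorem form_e₁ (m : ℕ) (ν : Idx m → ℤ) :
    form m (e₁ m) ν = ν (Sum.inl (Sum.inl 1)) := by
  simp [form, e₁, toBilin'_apply', gram, mulVec, dotProduct, Fintype.sum_sum_type]

theorem form_f₁ (m : ℕ) (ν : Idx m → ℤ) :
    form m (f₁ m) ν = ν (Sum.inl (Sum.inl 0)) := by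
  simp [form, f₁, toBilin'_apply', gram, mulVec, dotProduct, Fintype.sum_sum_type]

theorem gram_isSymm (m : ℕ) : (gram m).IsSymm := by
  rw [gram_eq, IsSymm, transpose_add, transpose_transpose, add_comm]

theorem form_isSymm (m : ℕ) : (form m).IsSymm := isSymm_toBilin'_iff_isSymm.mpr (gram_isSymm m)

theorem even_form_self (m : ℕ) (x : Idx m → ℤ) : Even (form m x x) := by
  rw [form, gram_eq, toBilin'_add_transpose_self_apply_self]; exact even_two_mul _

theorem B_eq_form (m : ℕ) (x y : Idx m → ℤ) : B m x y = form m x y :=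
  (toBilin'_apply' _ _ _).symm

theorem eichler_eq_eichlerTransvection (m : ℕ) : eichler m = eichlerTransvection (form m) := by
  funext x y ν
  simp only [eichler, eichlerTransvection, B_eq_form]

theorem eichler_composition_maps_u_to_v_general
    (m : ℕ) (d : ℤ) (hd : 0 < d)
    (u v u' v' w : Idx m → ℤ)
    -- `u, v, u', v'` lie in `U(2) ⊕ A₁(-1)^m`
    (hu0 : ∀ k : Fin 2, u (Sum.inl (Sum.inl k)) = 0)
    (hv0 : ∀ k : Fin 2, v (Sum.inl (Sum.inl k)) = 0)
    (hu'0 : ∀ k : Fin 2, u' (Sum.inl (Sum.inl k)) = 0)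
    (hv'0 : ∀ k : Fin 2, v' (Sum.inl (Sum.inl k)) = 0)
    -- `u² = v²`
    (huv : B m u u = B m v v)
    -- `w = (u - v)/d ∈ M`
    (hw : ∀ i, d * w i = u i - v i)
    -- `⟨u,u'⟩ = ⟨v,v'⟩ = d`
    (huu' : B m u u' = d) (hvv' : B m v v' = d) :
    (∀ ν μ : Idx m → ℤ,
      B m ((eichler m (e₁ m) (-v') ∘ eichler m (f₁ m) w ∘ eichler m (e₁ m) u') ν)
          ((eichler m (e₁ m) (-v') ∘ eichler m (f₁ m) w ∘ eichler m (e₁ m) u') μ)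
        = B m ν μ) ∧
    Function.Bijective
      (eichler m (e₁ m) (-v') ∘ eichler m (f₁ m) w ∘ eichler m (e₁ m) u') ∧
    (eichler m (e₁ m) (-v') ∘ eichler m (f₁ m) w ∘ eichler m (e₁ m) u') u = v := by
  have hd0 : d ≠ 0 := hd.ne'
  have hsymm := form_isSymm m
  have hdw : d • w = u - v := funext hw
  have hee : form m (e₁ m) (e₁ m) = 0 := by rw [form_e₁]; simp [e₁]
  have hff : form m (f₁ m) (f₁ m) = 0 := by rw [form_f₁]; simp [f₁]
  have hef : form m (e₁ m) (f₁ m) = 1 := by rw [form_e₁]; simp [f₁]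
  have hu'e : form m (e₁ m) u' = 0 := by rw [form_e₁, hu'0]
  have hv'e : form m (e₁ m) (-v') = 0 := by rw [map_neg, form_e₁, hv'0, neg_zero]
  have hwf : form m (f₁ m) w = 0 :=
    apply_eq_zero_of_smul_eq_sub hd0 hdw (by rw [form_f₁, hu0]) (by rw [form_f₁, hv0])
  simp only [eichler_eq_eichlerTransvection, B_eq_form, Function.comp_apply] at huv huu' hvv' ⊢
  refine ⟨fun ν μ => ?_, ?_, ?_⟩
  · rw [eichlerTransvection_apply_apply hsymm hee hv'e (even_form_self m _),
      eichlerTransvection_apply_apply hsymm hff hwf (even_form_self m _),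
      eichlerTransvection_apply_apply hsymm hee hu'e (even_form_self m _)]
  · exact (bijective_eichlerTransvection hsymm hee hv'e (even_form_self m _)).comp
      ((bijective_eichlerTransvection hsymm hff hwf (even_form_self m _)).comp
        (bijective_eichlerTransvection hsymm hee hu'e (even_form_self m _)))
  · exact eichlerTransvection_comp_apply_eq hsymm hd0 hee hef (by rw [form_e₁, hu0])
      (by rw [form_f₁, hu0]) (by rw [form_e₁, hv0]) (by rw [form_e₁, hv'0]) huv hdw
      (even_form_self m w) huu' hvv'

/-- In `M = U ⊕ U(2) ⊕ A₁(-1)^m`, for primitive `u, v ∈ U(2) ⊕ A₁(-1)^m` of the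
same norm and the same divisibility `d` with `w = (u-v)/d ∈ M`, and
`u', v' ∈ U(2) ⊕ A₁(-1)^m` with `⟨u,u'⟩ = ⟨v,v'⟩ = d`, the composition
`g = t(e₁,-v') ∘ t(f₁,w) ∘ t(e₁,u')` of Eichler transvections is an isometry
of `M` with `g(u) = v`. -/
theorem eichler_composition_maps_u_to_v
    (m : ℕ) (d : ℤ) (hd : 0 < d)
    (u v u' v' w : Idx m → ℤ)
    -- `u, v, u', v'` lie in `U(2) ⊕ A₁(-1)^m`
    (hu0 : ∀ k : Fin 2, u (Sum.inl (Sum.inl k)) = 0)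
    (hv0 : ∀ k : Fin 2, v (Sum.inl (Sum.inl k)) = 0)
    (hu'0 : ∀ k : Fin 2, u' (Sum.inl (Sum.inl k)) = 0)
    (hv'0 : ∀ k : Fin 2, v' (Sum.inl (Sum.inl k)) = 0)
    -- `u, v` are primitive
    (hupr : ∀ (z : Idx m → ℤ) (c : ℤ), u = c • z → IsUnit c)
    (hvpr : ∀ (z : Idx m → ℤ) (c : ℤ), v = c • z → IsUnit c)
    -- `u² = v²`
    (huv : B m u u = B m v v)
    -- `u` and `v` both have divisibility `d`
    (hdu : (∀ z : Idx m → ℤ, d ∣ B m u z) ∧ ∃ z : Idx m → ℤ, B m u z = d)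
    (hdv : (∀ z : Idx m → ℤ, d ∣ B m v z) ∧ ∃ z : Idx m → ℤ, B m v z = d)
    -- `w = (u - v)/d ∈ M`
    (hw : ∀ i, d * w i = u i - v i)
    -- `⟨u,u'⟩ = ⟨v,v'⟩ = d`
    (huu' : B m u u' = d) (hvv' : B m v v' = d) :
    (∀ ν μ : Idx m → ℤ,
      B m ((eichler m (e₁ m) (-v') ∘ eichler m (f₁ m) w ∘ eichler m (e₁ m) u') ν)
          ((eichler m (e₁ m) (-v') ∘ eichler m (f₁ m) w ∘ eichler m (e₁ m) u') μ)
        = B m ν μ) ∧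
    Function.Bijective
      (eichler m (e₁ m) (-v') ∘ eichler m (f₁ m) w ∘ eichler m (e₁ m) u') ∧
    (eichler m (e₁ m) (-v') ∘ eichler m (f₁ m) w ∘ eichler m (e₁ m) u') u = v :=
  eichler_composition_maps_u_to_v_general m d hd u v u' v' w hu0 hv0 hu'0 hv'0 huv hw huu' hvv'

end Stmt14
end
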